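/- arXiv:2206.04348 — 9 statements merged into one kernel-verified Lean document; each statement's English description precedes it below -/
import Mathlib

section
/- Let A, B, C be three affinely independent points in the Euclidean plane ℝ² and let P be a point in the interior of the triangle ABC (i.e., in the interior of the convex hull of {A, B, C}). Then sin(∠ P A B) · sin(∠ P B C) · sin(∠ P C A) = sin(∠ P A C) · sin(∠ P B A) · sin(∠ P C B), where ∠ X Y Z denotes the undirected angle at the vertex Y between the rays YX and YZ. -/
/-!
Both `sin ∠PXY · |PX|` and `sin ∠PYX · |PY|` are the distance from `P` to the line `XY`, so
`sin ∠PAB · |PA| = sin ∠PBA · |PB|` and similarly for the sides `BC` and `CA`. Multiplying the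
three identities, the factor `|PA| · |PB| · |PC|` appears on both sides and cancels, since an
interior point of a nondegenerate triangle is not a vertex.
-/

open EuclideanGeometry Set

theorem AffineIndependent.ne_of_mem_interior_convexHull {ι E : Type*} [Finite ι] [Nontrivial ι]
    [NormedAddCommGroup E] [NormedSpace ℝ E] {p : ι → E} (hp : AffineIndependent ℝ p) {x : E}
    (hx : x ∈ interior (convexHull ℝ (range p))) (i : ι) : x ≠ p i := by
  let b : AffineBasis ι ℝ E := ⟨p, hp, affineSpan_eq_top_of_nonempty_interior ⟨x, hx⟩⟩
  have hpos : ∀ j, 0 < b.coord j x := by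
    have hxb : x ∈ interior (convexHull ℝ (range b)) := hx
    rwa [b.interior_convexHull] at hxb
  rintro rfl
  obtain ⟨j, hji⟩ := exists_ne i
  exact (hpos j).ne' (b.coord_apply_ne hji)

theorem EuclideanGeometry.sin_angle_mul_dist_eq_sin_angle_mul_dist_swap {V P : Type*}
    [NormedAddCommGroup V] [InnerProductSpace ℝ V] [MetricSpace P] [NormedAddTorsor V P]
    (p x y : P) : Real.sin (∠ p x y) * dist p x = Real.sin (∠ p y x) * dist p y := by
  rw [angle_comm p x y, dist_comm p x]
  exact law_sin y x p

theorem ceva_trig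
    (A B C P : EuclideanSpace ℝ (Fin 2))
    (h : AffineIndependent ℝ ![A, B, C])
    (hP : P ∈ interior (convexHull ℝ ({A, B, C} : Set (EuclideanSpace ℝ (Fin 2))))) :
    Real.sin (∠ P A B) * Real.sin (∠ P B C) * Real.sin (∠ P C A) =
      Real.sin (∠ P A C) * Real.sin (∠ P B A) * Real.sin (∠ P C B) := by
  have hP' : P ∈ interior (convexHull ℝ (range ![A, B, C])) := by
    rwa [Matrix.range_cons, Matrix.range_cons_cons_empty, singleton_union]
  have hdist : dist P A * dist P B * dist P C ≠ 0 := by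
    simp only [mul_ne_zero_iff, dist_ne_zero]
    exact ⟨⟨h.ne_of_mem_interior_convexHull hP' 0, h.ne_of_mem_interior_convexHull hP' 1⟩,
      h.ne_of_mem_interior_convexHull hP' 2⟩
  apply mul_right_cancel₀ hdist
  calc Real.sin (∠ P A B) * Real.sin (∠ P B C) * Real.sin (∠ P C A) *
        (dist P A * dist P B * dist P C)
      = (Real.sin (∠ P A B) * dist P A) * (Real.sin (∠ P B C) * dist P B) *
        (Real.sin (∠ P C A) * dist P C) := by ring
    _ = (Real.sin (∠ P B A) * dist P B) * (Real.sin (∠ P C B) * dist P C) *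
        (Real.sin (∠ P A C) * dist P A) := by
      rw [sin_angle_mul_dist_eq_sin_angle_mul_dist_swap P A B,
        sin_angle_mul_dist_eq_sin_angle_mul_dist_swap P B C,
        sin_angle_mul_dist_eq_sin_angle_mul_dist_swap P C A]
    _ = Real.sin (∠ P A C) * Real.sin (∠ P B A) * Real.sin (∠ P C B) *
        (dist P A * dist P B * dist P C) := by ring
end

section
/- Let u, v, w, x, y, z be positive real numbers with u + v + w + x + y + z = π and sin u · sin v · sin w = sin x · sin y · sin z. Then there exist three affinely independent points A, B, C in the Euclidean plane ℝ² and a point P in the interior of the triangle ABC (the interior of the convex hull of {A, B, C}) such that ∠ P A B = u, ∠ P A C = x, ∠ P B C = v, ∠ P B A = y, ∠ P C A = w and ∠ P C B = z, where ∠ X Y Z denotes the undirected angle at the vertex Y. -/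
/-!
Put `P` at the origin and `A`, `B`, `C` on the rays of directions `0`, `π - (u + y)`,
`π + (w + x)`, at distances proportional to `sin y sin z`, `sin u sin z`, `sin u sin v`. By the
converse of the law of sines the triangles `PAB` and `PBC` then have the prescribed angles, and so
does `PCA`, because there the ratio `|PC| : |PA| = sin x : sin w` required by the law of sines is
the Ceva condition. The rays make angles `π - (u + y)`, `π - (v + z)`, `π - (w + x)` with each
other, so `P` is inside the triangle: the unit vectors along them, weighted by `sin (v + z)`,
`sin (w + x)`, `sin (u + y)`, add up to zero (they are the sides of a triangle with these angles).
-/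

open EuclideanGeometry Real

noncomputable def unitVec (θ : ℝ) : EuclideanSpace ℝ (Fin 2) := !₂[cos θ, sin θ]

@[simp] lemma unitVec_apply_zero (θ : ℝ) : unitVec θ 0 = cos θ := rfl

@[simp] lemma unitVec_apply_one (θ : ℝ) : unitVec θ 1 = sin θ := rfl

lemma EuclideanSpace.ext_fin_two {p q : EuclideanSpace ℝ (Fin 2)} (h₀ : p 0 = q 0)
    (h₁ : p 1 = q 1) : p = q := by
  ext i
  fin_cases i <;> assumption

lemma inner_unitVec (θ₁ θ₂ : ℝ) : inner ℝ (unitVec θ₁) (unitVec θ₂) = cos (θ₁ - θ₂) := by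
  simp [PiLp.inner_apply, Fin.sum_univ_two, cos_sub, mul_comm]

lemma norm_unitVec (θ : ℝ) : ‖unitVec θ‖ = 1 := by
  simp [EuclideanSpace.norm_eq, Fin.sum_univ_two]

lemma unitVec_add_int_mul_two_pi (θ : ℝ) (k : ℤ) : unitVec (θ + k * (2 * π)) = unitVec θ :=
  EuclideanSpace.ext_fin_two (by simp [cos_add_int_mul_two_pi])
    (by simp [sin_add_int_mul_two_pi])

lemma neg_smul_unitVec (r θ : ℝ) : -(r • unitVec θ) = r • unitVec (θ + π) := by
  apply EuclideanSpace.ext_fin_two <;> simp [cos_add_pi, sin_add_pi]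

lemma angle_smul_unitVec {r₁ r₂ θ₁ θ₂ : ℝ} (hr₁ : 0 < r₁) (hr₂ : 0 < r₂)
    (h₀ : 0 ≤ θ₁ - θ₂) (hπ : θ₁ - θ₂ ≤ π) :
    InnerProductGeometry.angle (r₁ • unitVec θ₁) (r₂ • unitVec θ₂) = θ₁ - θ₂ := by
  rw [InnerProductGeometry.angle_smul_left_of_pos _ _ hr₁,
    InnerProductGeometry.angle_smul_right_of_pos _ _ hr₂, InnerProductGeometry.angle,
    inner_unitVec, norm_unitVec, norm_unitVec, mul_one, div_one, arccos_cos h₀ hπ]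

lemma sin_smul_unitVec_sub (a b θ : ℝ) :
    sin a • unitVec (θ + (π - (a + b))) - sin b • unitVec θ
      = sin (a + b) • unitVec (θ + (π - a)) := by
  apply EuclideanSpace.ext_fin_two <;>
    simp only [PiLp.sub_apply, PiLp.smul_apply, unitVec_apply_zero, unitVec_apply_one, smul_eq_mul,
      cos_add, sin_add, cos_sub, sin_sub, cos_pi, sin_pi]
  · linear_combination (cos θ * sin b) * sin_sq_add_cos_sq a
  · linear_combination (sin θ * sin b) * sin_sq_add_cos_sq a

lemma smul_unitVec_sub_smul_unitVec {a b r s : ℝ} (hb : sin b ≠ 0) (h : r * sin a = s * sin b)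
    (θ : ℝ) : s • unitVec (θ + (π - (a + b))) - r • unitVec θ
      = (r / sin b * sin (a + b)) • unitVec (θ + (π - a)) := by
  have hr : r = r / sin b * sin b := by field_simp
  have hs : s = r / sin b * sin a := by field_simp; linarith
  rw [hs, hr, mul_div_cancel_right₀ _ hb, mul_smul, mul_smul, mul_smul, ← smul_sub,
    sin_smul_unitVec_sub]

lemma sin_smul_unitVec_add_eq_zero {α β γ : ℝ} (h : α + β + γ = π) :
    sin α • unitVec 0 + sin β • unitVec (π - γ) + sin γ • unitVec (π + β) = 0 := by
  obtain rfl : α = π - (β + γ) := by linarith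
  apply EuclideanSpace.ext_fin_two <;>
    simp only [PiLp.add_apply, PiLp.smul_apply, PiLp.zero_apply, unitVec_apply_zero,
      unitVec_apply_one, smul_eq_mul, sin_add, cos_add, sin_sub, cos_sub, sin_pi, cos_pi, sin_zero,
      cos_zero] <;>
    ring

lemma angle_zero_smul_unitVec_of_sine_law {a b r s : ℝ} (ha : 0 < a) (hb : 0 < b)
    (hab : a + b < π) (hr : 0 < r) (hs : 0 < s) (h : r * sin a = s * sin b) (θ φ : ℝ) (k : ℤ)
    (hφ : φ = θ + (π - (a + b)) + k * (2 * π)) :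
    ∠ 0 (r • unitVec θ) (s • unitVec φ) = a ∧ ∠ 0 (s • unitVec φ) (r • unitVec θ) = b := by
  rw [hφ, unitVec_add_int_mul_two_pi]
  have hsinb : 0 < sin b := sin_pos_of_pos_of_lt_pi hb (by linarith)
  have hρ : 0 < r / sin b * sin (a + b) :=
    mul_pos (div_pos hr hsinb) (sin_pos_of_pos_of_lt_pi (by linarith) hab)
  have hYX := smul_unitVec_sub_smul_unitVec hsinb.ne' h θ
  have hXY : r • unitVec θ - s • unitVec (θ + (π - (a + b)))
      = (r / sin b * sin (a + b)) • unitVec (θ + (π - a) + π) := by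
    rw [← neg_sub, hYX, neg_smul_unitVec]
  simp only [EuclideanGeometry.angle, vsub_eq_sub, zero_sub, neg_smul_unitVec, hYX, hXY]
  constructor
  · rw [angle_smul_unitVec hr hρ] <;> linarith
  · rw [InnerProductGeometry.angle_comm, angle_smul_unitVec hρ hs] <;> linarith

def wedge (p q : EuclideanSpace ℝ (Fin 2)) : ℝ := p 0 * q 1 - p 1 * q 0

lemma wedge_smul_unitVec (r s θ φ : ℝ) :
    wedge (r • unitVec θ) (s • unitVec φ) = r * s * sin (φ - θ) := by
  simp only [wedge, PiLp.smul_apply, smul_eq_mul, unitVec_apply_zero, unitVec_apply_one, sin_sub]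
  ring

lemma wedge_sub_sub (A B C : EuclideanSpace ℝ (Fin 2)) :
    wedge (B - A) (C - A) = wedge A B + wedge B C + wedge C A := by
  simp only [wedge, PiLp.sub_apply]
  ring

lemma affineIndependent_of_wedge_sub_ne_zero {A B C : EuclideanSpace ℝ (Fin 2)}
    (h : wedge (B - A) (C - A) ≠ 0) : AffineIndependent ℝ ![A, B, C] := by
  rw [affineIndependent_iff_not_collinear_set]
  intro hcol
  obtain ⟨d, hd⟩ := (collinear_iff_of_mem (Set.mem_insert A _)).1 hcol
  obtain ⟨t₁, rfl⟩ := hd B (by simp)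
  obtain ⟨t₂, rfl⟩ := hd C (by simp)
  apply h
  simp only [wedge, vadd_eq_add, add_sub_cancel_right, PiLp.smul_apply, smul_eq_mul]
  ring

lemma affineIndependent_smul_unitVec {α β γ r₁ r₂ r₃ : ℝ} (hα : 0 < α) (hβ : 0 < β) (hγ : 0 < γ)
    (h : α + β + γ = π) (hr₁ : 0 < r₁) (hr₂ : 0 < r₂) (hr₃ : 0 < r₃) :
    AffineIndependent ℝ ![r₁ • unitVec 0, r₂ • unitVec (π - γ), r₃ • unitVec (π + β)] := by
  -- twice the signed area of the triangle is a sum of three positive terms, one per side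
  apply affineIndependent_of_wedge_sub_ne_zero
  rw [wedge_sub_sub, wedge_smul_unitVec, wedge_smul_unitVec, wedge_smul_unitVec,
    show π + β - (π - γ) = π - α by linarith, show 0 - (π + β) = -β - π by ring, sub_zero,
    sin_pi_sub, sin_pi_sub, sin_sub_pi, sin_neg, neg_neg]
  have := sin_pos_of_pos_of_lt_pi hα (by linarith)
  have := sin_pos_of_pos_of_lt_pi hβ (by linarith)
  have := sin_pos_of_pos_of_lt_pi hγ (by linarith)
  positivity

lemma zero_mem_interior_convexHull_of_sum_smul_eq_zero {ι E : Type*} [Fintype ι]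
    [NormedAddCommGroup E] [NormedSpace ℝ E] [FiniteDimensional ℝ E] {p : ι → E}
    (hp : AffineIndependent ℝ p) (hcard : Fintype.card ι = Module.finrank ℝ E + 1) {c : ι → ℝ}
    (hc : ∀ i, 0 < c i) (h : ∑ i, c i • p i = 0) :
    (0 : E) ∈ interior (convexHull ℝ (Set.range p)) := by
  let b : AffineBasis ι ℝ E := ⟨p, hp, hp.affineSpan_eq_top_iff_card_eq_finrank_add_one.2 hcard⟩
  have : Nonempty ι := b.nonempty
  set S := ∑ i, c i
  have hS : 0 < S := Finset.sum_pos (fun i _ => hc i) Finset.univ_nonempty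
  have hw : ∑ i, S⁻¹ * c i = 1 := by rw [← Finset.mul_sum, inv_mul_cancel₀ hS.ne']
  have h0 : Finset.univ.affineCombination ℝ b (fun i => S⁻¹ * c i) = 0 := by
    simp only [Finset.affineCombination_eq_linear_combination _ _ _ hw, mul_smul, ← Finset.smul_sum]
    exact (congrArg (S⁻¹ • ·) h).trans (smul_zero _)
  change (0 : E) ∈ interior (convexHull ℝ (Set.range b))
  rw [b.interior_convexHull]
  intro i
  rw [← h0, b.coord_apply_combination_of_mem (Finset.mem_univ i) hw]
  exact mul_pos (inv_pos.2 hS) (hc i)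

lemma zero_mem_interior_convexHull_smul_unitVec {α β γ r₁ r₂ r₃ : ℝ} (hα : 0 < α) (hβ : 0 < β)
    (hγ : 0 < γ) (h : α + β + γ = π) (hr₁ : 0 < r₁) (hr₂ : 0 < r₂) (hr₃ : 0 < r₃) :
    (0 : EuclideanSpace ℝ (Fin 2)) ∈ interior (convexHull ℝ
      {r₁ • unitVec 0, r₂ • unitVec (π - γ), r₃ • unitVec (π + β)}) := by
  rw [← Matrix.range_cons_cons_empty _ _ ![], ← Set.singleton_union, ← Matrix.range_cons]
  refine zero_mem_interior_convexHull_of_sum_smul_eq_zero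
    (affineIndependent_smul_unitVec hα hβ hγ h hr₁ hr₂ hr₃) (by simp)
    (c := ![sin α / r₁, sin β / r₂, sin γ / r₃]) ?_ ?_
  · intro i
    fin_cases i <;> exact div_pos (sin_pos_of_pos_of_lt_pi (by assumption) (by linarith)) ‹_›
  · simp only [Fin.sum_univ_three, Matrix.cons_val_zero, Matrix.cons_val_one, Matrix.cons_val_two,
      Matrix.head_cons, Matrix.tail_cons, smul_smul, div_mul_cancel₀ _ hr₁.ne',
      div_mul_cancel₀ _ hr₂.ne', div_mul_cancel₀ _ hr₃.ne']
    exact sin_smul_unitVec_add_eq_zero h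

theorem ceva_trig_converse
    (u v w x y z : ℝ)
    (hu : 0 < u) (hv : 0 < v) (hw : 0 < w)
    (hx : 0 < x) (hy : 0 < y) (hz : 0 < z)
    (hsum : u + v + w + x + y + z = Real.pi)
    (heq : Real.sin u * Real.sin v * Real.sin w = Real.sin x * Real.sin y * Real.sin z) :
    ∃ A B C P : EuclideanSpace ℝ (Fin 2),
      AffineIndependent ℝ ![A, B, C] ∧
      P ∈ interior (convexHull ℝ ({A, B, C} : Set (EuclideanSpace ℝ (Fin 2)))) ∧
      ∠ P A B = u ∧ ∠ P A C = x ∧ ∠ P B C = v ∧ ∠ P B A = y ∧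
      ∠ P C A = w ∧ ∠ P C B = z := by
  have hsin (t : ℝ) (h₀ : 0 < t) (hπ : t < π) : 0 < sin t := sin_pos_of_pos_of_lt_pi h₀ hπ
  obtain ⟨su, sv, sy, sz⟩ : 0 < sin u ∧ 0 < sin v ∧ 0 < sin y ∧ 0 < sin z :=
    ⟨hsin u hu (by linarith), hsin v hv (by linarith), hsin y hy (by linarith),
      hsin z hz (by linarith)⟩
  obtain ⟨hPAB, hPBA⟩ := angle_zero_smul_unitVec_of_sine_law (r := sin y * sin z)
    (s := sin u * sin z) hu hy (by linarith) (by positivity) (by positivity) (by ring)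
    0 (π - (u + y)) 0 (by simp)
  obtain ⟨hPBC, hPCB⟩ := angle_zero_smul_unitVec_of_sine_law (r := sin u * sin z)
    (s := sin u * sin v) hv hz (by linarith) (by positivity) (by positivity) (by ring)
    (π - (u + y)) (π + (w + x)) 0 (by simp; linarith)
  obtain ⟨hPCA, hPAC⟩ := angle_zero_smul_unitVec_of_sine_law (r := sin u * sin v)
    (s := sin y * sin z) hw hx (by linarith) (by positivity) (by positivity)
    (by linear_combination heq) (π + (w + x)) 0 (-1) (by push_cast; linarith)
  have hangles : v + z + (w + x) + (u + y) = π := by linarith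
  exact ⟨_, _, _, 0,
    affineIndependent_smul_unitVec (by positivity) (by positivity) (by positivity) hangles
      (by positivity) (by positivity) (by positivity),
    zero_mem_interior_convexHull_smul_unitVec (by positivity) (by positivity) (by positivity)
      hangles (by positivity) (by positivity) (by positivity),
    hPAB, hPAC, hPBC, hPBA, hPCA, hPCB⟩
end

section
/- Let (A, B, C) be a π-commensurable triangle with A < 90, B < 90 and C < 90 (an acute triangle). Then the two tuples T1 = ((A+C−B)/2, (A+B−C)/2, (A+B−C)/2, (B+C−A)/2, (B+C−A)/2, (A+C−B)/2) and T2 = ((A+B−C)/2, (A+C−B)/2, (B+C−A)/2, (A+B−C)/2, (A+C−B)/2, (B+C−A)/2) are π-commensurable subdivisions of (A, B, C); moreover, if A, B, C are pairwise distinct then T1, T2 and the bisector subdivision are three pairwise distinct subdivisions. -/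
/-- Sine of an angle given in degrees (as a rational number). -/
noncomputable def sdeg (q : ℚ) : ℝ := Real.sin (q * Real.pi / 180)

/-- A π-commensurable triangle: positive rational angles in degrees summing to 180. -/
def IsPiTriangle (A B C : ℚ) : Prop := 0 < A ∧ 0 < B ∧ 0 < C ∧ A + B + C = 180

/-- A π-commensurable subdivision of the triangle `(A, B, C)`:
a 6-tuple `(u, x, v, y, w, z)` of positive rationals with `u + x = A`, `v + y = B`,
`w + z = C` satisfying the trigonometric Ceva relation. -/
def IsPiSubdivision (A B C u x v y w z : ℚ) : Prop :=
  0 < u ∧ 0 < x ∧ 0 < v ∧ 0 < y ∧ 0 < w ∧ 0 < z ∧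
  u + x = A ∧ v + y = B ∧ w + z = C ∧
  sdeg u * sdeg v * sdeg w = sdeg x * sdeg y * sdeg z

/-- An acute π-commensurable triangle admits the two further trivial subdivisions
`T1` and `T2`; if its angles are pairwise distinct, these together with the bisector
subdivision are pairwise distinct. -/
theorem acute_trivial_subdivisions (A B C : ℚ) (hT : IsPiTriangle A B C)
    (hA : A < 90) (hB : B < 90) (hC : C < 90) :
    IsPiSubdivision A B C
      ((A + C - B)/2) ((A + B - C)/2) ((A + B - C)/2)
      ((B + C - A)/2) ((B + C - A)/2) ((A + C - B)/2) ∧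
    IsPiSubdivision A B C
      ((A + B - C)/2) ((A + C - B)/2) ((B + C - A)/2)
      ((A + B - C)/2) ((A + C - B)/2) ((B + C - A)/2) ∧
    (A ≠ B → B ≠ C → A ≠ C →
      (((A + C - B)/2, (A + B - C)/2, (A + B - C)/2,
        (B + C - A)/2, (B + C - A)/2, (A + C - B)/2) ≠
       ((A + B - C)/2, (A + C - B)/2, (B + C - A)/2,
        (A + B - C)/2, (A + C - B)/2, (B + C - A)/2) ∧
      ((A + C - B)/2, (A + B - C)/2, (A + B - C)/2,
        (B + C - A)/2, (B + C - A)/2, (A + C - B)/2) ≠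
       (A/2, A/2, B/2, B/2, C/2, C/2) ∧
      ((A + B - C)/2, (A + C - B)/2, (B + C - A)/2,
        (A + B - C)/2, (A + C - B)/2, (B + C - A)/2) ≠
       (A/2, A/2, B/2, B/2, C/2, C/2))) := by

  obtain ⟨hA0, hB0, hC0, hsum⟩ := hT
  have h1 : 0 < (A + C - B)/2 := by linarith
  have h2 : 0 < (A + B - C)/2 := by linarith
  have h3 : 0 < (B + C - A)/2 := by linarith
  refine ⟨⟨h1, h2, h2, h3, h3, h1, by ring, by linarith, by linarith, by ring⟩,
    ⟨h2, h1, h3, h2, h1, h3, by linarith, by linarith, by linarith, by ring⟩,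
    fun hAB hBC hAC => ⟨?_, ?_, ?_⟩⟩
  · intro h
    have := congrArg Prod.fst h
    simp at this
    exact hBC (by linarith)
  · intro h
    have := congrArg Prod.fst h
    simp at this
    exact hBC (by linarith)
  · intro h
    have := congrArg Prod.fst h
    simp at this
    exact hBC (by linarith)
end

section
/- Let (A, B, C) be a π-commensurable triangle with A, B, C pairwise distinct. If max(A, B, C) ≥ 90, then the only trivial subdivision of (A, B, C) is the bisector subdivision. If A, B, C are all less than 90, then the trivial subdivisions of (A, B, C) are exactly the three tuples: the bisector subdivision, T1 = ((A+C−B)/2, (A+B−C)/2, (A+B−C)/2, (B+C−A)/2, (B+C−A)/2, (A+C−B)/2), and T2 = ((A+B−C)/2, (A+C−B)/2, (B+C−A)/2, (A+B−C)/2, (A+C−B)/2, (B+C−A)/2). -/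
/-- A trivial subdivision: a π-commensurable subdivision in which `(x, y, z)` is a
permutation of `(u, v, w)`. -/
def IsTrivialSubdivision (A B C u x v y w z : ℚ) : Prop :=
  IsPiSubdivision A B C u x v y w z ∧ ({x, y, z} : Multiset ℚ) = ({u, v, w} : Multiset ℚ)

lemma pair_cases {y z a b : ℚ} (h : ({y, z} : Multiset ℚ) = {a, b}) :
    (y = a ∧ z = b) ∨ (y = b ∧ z = a) := by
  have hy : y ∈ ({a, b} : Multiset ℚ) := h ▸ Multiset.mem_cons_self y _
  simp only [Multiset.insert_eq_cons, Multiset.mem_cons, Multiset.mem_singleton] at hy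
  rcases hy with rfl | rfl
  · left
    refine ⟨rfl, ?_⟩
    have := (Multiset.cons_inj_right y).mp h
    simpa using this
  · right
    refine ⟨rfl, ?_⟩
    have h' : (y ::ₘ {z} : Multiset ℚ) = y ::ₘ {a} := by
      rw [show ({a, y} : Multiset ℚ) = y ::ₘ {a} from Multiset.cons_swap a y 0] at h
      exact h
    have := (Multiset.cons_inj_right y).mp h'
    simpa using this

lemma triple_cases {x y z u v w : ℚ} (h : ({x, y, z} : Multiset ℚ) = {u, v, w}) :
    (x = u ∧ y = v ∧ z = w) ∨ (x = u ∧ y = w ∧ z = v) ∨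
    (x = v ∧ y = u ∧ z = w) ∨ (x = v ∧ y = w ∧ z = u) ∨
    (x = w ∧ y = u ∧ z = v) ∨ (x = w ∧ y = v ∧ z = u) := by
  have hx : x ∈ ({u, v, w} : Multiset ℚ) := h ▸ Multiset.mem_cons_self x _
  simp only [Multiset.insert_eq_cons, Multiset.mem_cons, Multiset.mem_singleton] at hx
  rcases hx with rfl | rfl | rfl
  · have h' := (Multiset.cons_inj_right x).mp h
    rcases pair_cases h' with ⟨h1, h2⟩ | ⟨h1, h2⟩
    · exact Or.inl ⟨rfl, h1, h2⟩
    · exact Or.inr (Or.inl ⟨rfl, h1, h2⟩)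
  · rw [show ({u, x, w} : Multiset ℚ) = x ::ₘ {u, w} from Multiset.cons_swap u x _] at h
    have h' := (Multiset.cons_inj_right x).mp h
    rcases pair_cases h' with ⟨h1, h2⟩ | ⟨h1, h2⟩
    · exact Or.inr (Or.inr (Or.inl ⟨rfl, h1, h2⟩))
    · exact Or.inr (Or.inr (Or.inr (Or.inl ⟨rfl, h1, h2⟩)))
  · rw [show ({u, v, x} : Multiset ℚ) = x ::ₘ {u, v} from ?_] at h
    · have h' := (Multiset.cons_inj_right x).mp h
      rcases pair_cases h' with ⟨h1, h2⟩ | ⟨h1, h2⟩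
      · exact Or.inr (Or.inr (Or.inr (Or.inr (Or.inl ⟨rfl, h1, h2⟩))))
      · exact Or.inr (Or.inr (Or.inr (Or.inr (Or.inr ⟨rfl, h1, h2⟩))))
    · rw [show ({v, x} : Multiset ℚ) = x ::ₘ {v} from Multiset.cons_swap v x 0]
      exact Multiset.cons_swap u x _

lemma rot3 (a b c : ℚ) : ({a, b, c} : Multiset ℚ) = {c, a, b} := by
  rw [show ({c, a, b} : Multiset ℚ) = a ::ₘ {c, b} from Multiset.cons_swap c a _]
  congr 1
  exact Multiset.cons_swap b c 0

lemma prod_sdeg_of_multiset_eq {x y z u v w : ℚ}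
    (h : ({x, y, z} : Multiset ℚ) = {u, v, w}) :
    sdeg u * sdeg v * sdeg w = sdeg x * sdeg y * sdeg z := by
  have := congrArg (fun s : Multiset ℚ => (s.map sdeg).prod) h
  simp only [Multiset.insert_eq_cons, Multiset.map_cons, Multiset.map_singleton,
    Multiset.prod_cons, Multiset.prod_singleton] at this
  rw [mul_assoc, mul_assoc, this]

/-- Classification of the trivial subdivisions of a scalene π-commensurable triangle. -/
theorem trivial_subdivision_classification (A B C : ℚ) (hT : IsPiTriangle A B C)
    (hAB : A ≠ B) (hBC : B ≠ C) (hAC : A ≠ C) :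
    (90 ≤ max A (max B C) →
      ∀ u x v y w z : ℚ, IsTrivialSubdivision A B C u x v y w z →
        (u, x, v, y, w, z) = (A/2, A/2, B/2, B/2, C/2, C/2)) ∧
    (A < 90 → B < 90 → C < 90 →
      ∀ u x v y w z : ℚ, IsTrivialSubdivision A B C u x v y w z ↔
        ((u, x, v, y, w, z) = (A/2, A/2, B/2, B/2, C/2, C/2) ∨
         (u, x, v, y, w, z) =
           ((A + C - B)/2, (A + B - C)/2, (A + B - C)/2,
            (B + C - A)/2, (B + C - A)/2, (A + C - B)/2) ∨
         (u, x, v, y, w, z) =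
           ((A + B - C)/2, (A + C - B)/2, (B + C - A)/2,
            (A + B - C)/2, (A + C - B)/2, (B + C - A)/2))) := by
  obtain ⟨hA, hB, hC, hS⟩ := hT
  constructor
  · intro hmax u x v y w z ⟨⟨hu, hx, hv, hy, hw, hz, hux, hvy, hwz, _⟩, hm⟩
    have h3 : 90 ≤ A ∨ 90 ≤ B ∨ 90 ≤ C := by
      rcases le_max_iff.mp hmax with h | h
      · exact Or.inl h
      · rcases le_max_iff.mp h with h | h
        · exact Or.inr (Or.inl h)
        · exact Or.inr (Or.inr h)
    rcases h3 with h90 | h90 | h90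
    all_goals {
      rcases triple_cases hm with ⟨e1, e2, e3⟩ | ⟨e1, e2, e3⟩ | ⟨e1, e2, e3⟩ |
        ⟨e1, e2, e3⟩ | ⟨e1, e2, e3⟩ | ⟨e1, e2, e3⟩ <;> subst e1 <;> subst e2 <;> subst e3
      · simp only [Prod.mk.injEq]
        refine ⟨by linarith, by linarith, by linarith, by linarith, by linarith, by linarith⟩
      · exact absurd (by linarith : B = C) hBC
      · exact absurd (by linarith : A = B) hAB
      · exact absurd (by linarith) (not_lt.mpr h90)
      · exact absurd (by linarith) (not_lt.mpr h90)
      · exact absurd (by linarith : A = C) hAC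
    }
  · intro hA90 hB90 hC90 u x v y w z
    constructor
    · rintro ⟨⟨hu, hx, hv, hy, hw, hz, hux, hvy, hwz, _⟩, hm⟩
      rcases triple_cases hm with ⟨e1, e2, e3⟩ | ⟨e1, e2, e3⟩ | ⟨e1, e2, e3⟩ |
        ⟨e1, e2, e3⟩ | ⟨e1, e2, e3⟩ | ⟨e1, e2, e3⟩ <;> subst e1 <;> subst e2 <;> subst e3
      · exact Or.inl (by simp only [Prod.mk.injEq]; refine ⟨by linarith, by linarith,
          by linarith, by linarith, by linarith, by linarith⟩)
      · exact absurd (by linarith : B = C) hBC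
      · exact absurd (by linarith : A = B) hAB
      · exact Or.inr (Or.inl (by simp only [Prod.mk.injEq]; refine ⟨by linarith, by linarith,
          by linarith, by linarith, by linarith, by linarith⟩))
      · exact Or.inr (Or.inr (by simp only [Prod.mk.injEq]; refine ⟨by linarith, by linarith,
          by linarith, by linarith, by linarith, by linarith⟩))
      · exact absurd (by linarith : A = C) hAC
    · rintro (h | h | h) <;> simp only [Prod.mk.injEq] at h <;>
        obtain ⟨h1, h2, h3, h4, h5, h6⟩ := h <;>
        subst h1 <;> subst h2 <;> subst h3 <;> subst h4 <;> subst h5 <;> subst h6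
      · exact ⟨⟨by linarith, by linarith, by linarith, by linarith, by linarith, by linarith,
          by ring, by ring, by ring, rfl⟩, rfl⟩
      · refine ⟨⟨by linarith, by linarith, by linarith, by linarith, by linarith, by linarith,
          by ring, by ring, by ring, ?_⟩, ?_⟩
        · exact prod_sdeg_of_multiset_eq (rot3 _ _ _)
        · exact rot3 _ _ _
      · refine ⟨⟨by linarith, by linarith, by linarith, by linarith, by linarith, by linarith,
          by ring, by ring, by ring, ?_⟩, ?_⟩
        · exact prod_sdeg_of_multiset_eq ((rot3 _ _ _).symm)
        · exact (rot3 _ _ _).symm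
end

section
/- For every rational number t with 0 < t < 30, the tuple (u, x, v, y, w, z) = (30, 60+t, t, t, 60−2t, 30−t) is a π-commensurable subdivision of the π-commensurable triangle (90+t, 2t, 90−3t). In particular, sin(30·π/180)·sin(tπ/180)·sin((60−2t)π/180) = sin((60+t)π/180)·sin(tπ/180)·sin((30−t)π/180). -/
lemma key_trig (x : ℝ) :
    Real.sin (Real.pi/6) * Real.sin (Real.pi/3 - 2*x)
      = Real.sin (Real.pi/3 + x) * Real.sin (Real.pi/6 - x) := by
  rw [Real.sin_sub, Real.sin_add, Real.sin_sub, Real.sin_two_mul, Real.cos_two_mul,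
    Real.sin_pi_div_six, Real.cos_pi_div_six, Real.sin_pi_div_three, Real.cos_pi_div_three]
  linear_combination (Real.sqrt 3 / 4) * (Real.sin_sq_add_cos_sq x) + (Real.cos x * Real.sin x / 4) * (Real.sq_sqrt (by norm_num : (0:ℝ) ≤ 3))

lemma key_sdeg (t : ℚ) :
    sdeg 30 * sdeg t * sdeg (60 - 2*t) = sdeg (60 + t) * sdeg t * sdeg (30 - t) := by
  unfold sdeg
  have h30 : ((30:ℚ):ℝ) * Real.pi / 180 = Real.pi/6 := by push_cast; ring
  have h60s : ((60 - 2*t : ℚ):ℝ) * Real.pi / 180 = Real.pi/3 - 2*((t:ℝ)*Real.pi/180) := by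
    push_cast; ring
  have h60a : ((60 + t : ℚ):ℝ) * Real.pi / 180 = Real.pi/3 + ((t:ℝ)*Real.pi/180) := by
    push_cast; ring
  have h30s : ((30 - t : ℚ):ℝ) * Real.pi / 180 = Real.pi/6 - ((t:ℝ)*Real.pi/180) := by
    push_cast; ring
  rw [h30, h60s, h60a, h30s]
  have := key_trig ((t:ℝ)*Real.pi/180)
  linear_combination Real.sin ((t:ℝ)*Real.pi/180) * this

/-- The first one-parameter family of nontrivial solutions. -/
theorem family_one (t : ℚ) (h0 : 0 < t) (h30 : t < 30) :
    IsPiSubdivision (90 + t) (2*t) (90 - 3*t) 30 (60 + t) t t (60 - 2*t) (30 - t) ∧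
    sdeg 30 * sdeg t * sdeg (60 - 2*t) = sdeg (60 + t) * sdeg t * sdeg (30 - t) := by
  refine ⟨⟨by norm_num, by linarith, h0, h0, by linarith, by linarith,
    by ring, by ring, by ring, key_sdeg t⟩, key_sdeg t⟩
end

section
/- For every rational number t with 0 < t < 30, the tuple (u, x, v, y, w, z) = (30, 30−t, 90−3t, 2t, t, 30+t) is a π-commensurable subdivision of the π-commensurable triangle (60−t, 90−t, 30+2t). In particular, sin(30·π/180)·sin((90−3t)π/180)·sin(tπ/180) = sin((30−t)π/180)·sin(2tπ/180)·sin((30+t)π/180). -/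
/-- The second one-parameter family of nontrivial solutions. -/
theorem family_two (t : ℚ) (h0 : 0 < t) (h30 : t < 30) :
    IsPiSubdivision (60 - t) (90 - t) (30 + 2*t) 30 (30 - t) (90 - 3*t) (2*t) t (30 + t) ∧
    sdeg 30 * sdeg (90 - 3*t) * sdeg t = sdeg (30 - t) * sdeg (2*t) * sdeg (30 + t) := by
  have key : sdeg 30 * sdeg (90 - 3*t) * sdeg t = sdeg (30 - t) * sdeg (2*t) * sdeg (30 + t) := by
    unfold sdeg
    have a1 : ((30:ℚ):ℝ) * Real.pi / 180 = Real.pi/6 := by push_cast; ring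
    have a2 : ((90 - 3*t:ℚ):ℝ) * Real.pi / 180
        = Real.pi/2 - 3*((t:ℝ) * Real.pi / 180) := by push_cast; ring
    have a3 : ((30 - t:ℚ):ℝ) * Real.pi / 180
        = Real.pi/6 - (t:ℝ) * Real.pi / 180 := by push_cast; ring
    have a4 : ((2*t:ℚ):ℝ) * Real.pi / 180 = 2*((t:ℝ) * Real.pi / 180) := by push_cast; ring
    have a5 : ((30 + t:ℚ):ℝ) * Real.pi / 180
        = Real.pi/6 + (t:ℝ) * Real.pi / 180 := by push_cast; ring
    rw [a1, a2, a3, a4, a5, Real.sin_pi_div_two_sub, Real.cos_three_mul, Real.sin_two_mul,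
      Real.sin_sub, Real.sin_add, Real.sin_pi_div_six, Real.cos_pi_div_six]
    set x := (t:ℝ) * Real.pi / 180
    have h3 : Real.sqrt 3 ^ 2 = 3 := Real.sq_sqrt (by norm_num)
    linear_combination (3 * Real.sin x * Real.cos x / 2) * (Real.sin_sq_add_cos_sq x)
      + (Real.cos x * Real.sin x ^ 3 / 2) * h3
  refine ⟨⟨by norm_num, by linarith, by linarith, by linarith, by linarith, by linarith,
    by ring, by ring, by ring, key⟩, key⟩
end

section
/- For every rational number t with 0 < t < 15, the tuple (u, x, v, y, w, z) = (30, 30−2t, 30−2t, t, 2t, 90+t) is a π-commensurable subdivision of the π-commensurable triangle (60−2t, 30−t, 90+3t). In particular, sin(30·π/180)·sin((30−2t)π/180)·sin(2tπ/180) = sin((30−2t)π/180)·sin(tπ/180)·sin((90+t)π/180). -/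
/-- The third one-parameter family of nontrivial solutions. -/
theorem family_three (t : ℚ) (h0 : 0 < t) (h15 : t < 15) :
    IsPiSubdivision (60 - 2*t) (30 - t) (90 + 3*t) 30 (30 - 2*t) (30 - 2*t) t (2*t) (90 + t) ∧
    sdeg 30 * sdeg (30 - 2*t) * sdeg (2*t) = sdeg (30 - 2*t) * sdeg t * sdeg (90 + t) := by
  have key : sdeg 30 * sdeg (30 - 2*t) * sdeg (2*t)
      = sdeg (30 - 2*t) * sdeg t * sdeg (90 + t) := by
    unfold sdeg
    push_cast
    rw [show ((30:ℝ)) * Real.pi / 180 = Real.pi / 6 by ring, Real.sin_pi_div_six,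
      show (2*(t:ℝ)) * Real.pi / 180 = 2 * ((t:ℝ) * Real.pi / 180) by ring, Real.sin_two_mul,
      show ((90:ℝ) + t) * Real.pi / 180 = Real.pi / 2 + (t:ℝ) * Real.pi / 180 by ring,
      Real.sin_add, Real.sin_pi_div_two, Real.cos_pi_div_two]
    ring
  refine ⟨⟨by norm_num, by linarith, by linarith, h0, by linarith, by linarith,
    by ring, by ring, by ring, key⟩, key⟩
end

section
/- For every rational number t with 0 < t < 15, the tuple (u, x, v, y, w, z) = (60−4t, 30−2t, t, 3t, 60+t, 30+t) is a π-commensurable subdivision of the π-commensurable triangle (90−6t, 4t, 90+2t). In particular, sin((60−4t)π/180)·sin(tπ/180)·sin((60+t)π/180) = sin((30−2t)π/180)·sin(3tπ/180)·sin((30+t)π/180). -/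
lemma family_four_key (x : ℝ) :
    Real.sin (Real.pi/3 - 4*x) * Real.sin x * Real.sin (Real.pi/3 + x)
      = Real.sin (Real.pi/6 - 2*x) * Real.sin (3*x) * Real.sin (Real.pi/6 + x) := by
  have h3 : Real.sqrt 3 * Real.sqrt 3 = 3 := Real.mul_self_sqrt (by norm_num)
  have hp : Real.sin x ^ 2 + Real.cos x ^ 2 = 1 := Real.sin_sq_add_cos_sq x
  rw [show (4:ℝ)*x = 2*(2*x) by ring]
  simp only [Real.sin_sub, Real.sin_add, Real.cos_sub, Real.cos_add,
    Real.sin_two_mul, Real.cos_two_mul, Real.sin_three_mul,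
    Real.sin_pi_div_three, Real.cos_pi_div_three,
    Real.sin_pi_div_six, Real.cos_pi_div_six]
  linear_combination
    (2 * Real.sin x * Real.cos x ^ 5 - 2 * Real.sin x * Real.cos x ^ 3
      + Real.sin x * Real.cos x / 4 + 3/2 * Real.sin x ^ 3 * Real.cos x
      - 2 * Real.sin x ^ 5 * Real.cos x) * h3
    + (6 * Real.sin x * Real.cos x ^ 3 - 3/2 * Real.sin x * Real.cos x
      - Real.sin x ^ 2 * Real.sqrt 3 - 6 * Real.sin x ^ 3 * Real.cos x) * hp

/-- The fourth one-parameter family of nontrivial solutions. -/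
theorem family_four (t : ℚ) (h0 : 0 < t) (h15 : t < 15) :
    IsPiSubdivision (90 - 6*t) (4*t) (90 + 2*t) (60 - 4*t) (30 - 2*t) t (3*t) (60 + t) (30 + t) ∧
    sdeg (60 - 4*t) * sdeg t * sdeg (60 + t) = sdeg (30 - 2*t) * sdeg (3*t) * sdeg (30 + t) := by
  have key : sdeg (60 - 4*t) * sdeg t * sdeg (60 + t)
      = sdeg (30 - 2*t) * sdeg (3*t) * sdeg (30 + t) := by
    have h := family_four_key ((t:ℝ) * Real.pi / 180)
    unfold sdeg
    have e1 : ((60 - 4*t : ℚ) : ℝ) * Real.pi / 180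
        = Real.pi/3 - 4*((t:ℝ) * Real.pi / 180) := by push_cast; ring
    have e2 : ((60 + t : ℚ) : ℝ) * Real.pi / 180
        = Real.pi/3 + (t:ℝ) * Real.pi / 180 := by push_cast; ring
    have e3 : ((30 - 2*t : ℚ) : ℝ) * Real.pi / 180
        = Real.pi/6 - 2*((t:ℝ) * Real.pi / 180) := by push_cast; ring
    have e4 : ((3*t : ℚ) : ℝ) * Real.pi / 180
        = 3*((t:ℝ) * Real.pi / 180) := by push_cast; ring
    have e5 : ((30 + t : ℚ) : ℝ) * Real.pi / 180
        = Real.pi/6 + (t:ℝ) * Real.pi / 180 := by push_cast; ring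
    rw [e1, e2, e3, e4, e5]
    exact h
  refine ⟨⟨?_, ?_, ?_, ?_, ?_, ?_, ?_, ?_, ?_, key⟩, key⟩ <;> linarith
end

section
/- The largest possible angle in the triangles obtained via the four solution families is 135 degrees. Precisely: for every tuple belonging to one of the four families — (30, 60+t, t, t, 60−2t, 30−t) with 0 < t < 30, yielding triangle (90+t, 2t, 90−3t); (30, 30−t, 90−3t, 2t, t, 30+t) with 0 < t < 30, yielding triangle (60−t, 90−t, 30+2t); (30, 30−2t, 30−2t, t, 2t, 90+t) with 0 < t < 15, yielding triangle (60−2t, 30−t, 90+3t); and (60−4t, 30−2t, t, 3t, 60+t, 30+t) with 0 < t < 15, yielding triangle (90−6t, 4t, 90+2t), with t rational — each of the three angles of the corresponding triangle is strictly less than 135 degrees; and for every ε > 0 there is a rational t in the relevant range such that the corresponding triangle has an angle exceeding 135 − ε degrees. -/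
/-- The largest possible angle in the triangles arising from the four solution families
is 135 degrees: every angle of every such triangle is strictly below 135, and angles
arbitrarily close to 135 occur. -/
theorem family_angle_bound :
    (∀ t : ℚ, 0 < t → t < 30 → (90 + t < 135 ∧ 2*t < 135 ∧ 90 - 3*t < 135)) ∧
    (∀ t : ℚ, 0 < t → t < 30 → (60 - t < 135 ∧ 90 - t < 135 ∧ 30 + 2*t < 135)) ∧
    (∀ t : ℚ, 0 < t → t < 15 → (60 - 2*t < 135 ∧ 30 - t < 135 ∧ 90 + 3*t < 135)) ∧
    (∀ t : ℚ, 0 < t → t < 15 → (90 - 6*t < 135 ∧ 4*t < 135 ∧ 90 + 2*t < 135)) ∧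
    (∀ ε : ℝ, 0 < ε → ∃ t : ℚ,
      (0 < t ∧ t < 30 ∧
        (135 - ε < 90 + (t:ℝ) ∨ 135 - ε < 2*(t:ℝ) ∨ 135 - ε < 90 - 3*(t:ℝ))) ∨
      (0 < t ∧ t < 30 ∧
        (135 - ε < 60 - (t:ℝ) ∨ 135 - ε < 90 - (t:ℝ) ∨ 135 - ε < 30 + 2*(t:ℝ))) ∨
      (0 < t ∧ t < 15 ∧
        (135 - ε < 60 - 2*(t:ℝ) ∨ 135 - ε < 30 - (t:ℝ) ∨ 135 - ε < 90 + 3*(t:ℝ))) ∨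
      (0 < t ∧ t < 15 ∧
        (135 - ε < 90 - 6*(t:ℝ) ∨ 135 - ε < 4*(t:ℝ) ∨ 135 - ε < 90 + 2*(t:ℝ)))) := by
  refine ⟨fun t h1 h2 => ⟨by linarith, by linarith, by linarith⟩,
          fun t h1 h2 => ⟨by linarith, by linarith, by linarith⟩,
          fun t h1 h2 => ⟨by linarith, by linarith, by linarith⟩,
          fun t h1 h2 => ⟨by linarith, by linarith, by linarith⟩, ?_⟩
  intro ε hε
  obtain ⟨t, ht1, ht2⟩ := exists_rat_btwn (show max 0 (15 - ε/3) < (15:ℝ) by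
    rw [max_lt_iff]; constructor <;> linarith)
  have h0 : (0:ℝ) < t := lt_of_le_of_lt (le_max_left _ _) ht1
  have h3 : 15 - ε/3 < (t:ℝ) := lt_of_le_of_lt (le_max_right _ _) ht1
  refine ⟨t, Or.inr (Or.inr (Or.inl ⟨?_, ?_, Or.inr (Or.inr ?_)⟩))⟩
  · exact_mod_cast h0
  · exact_mod_cast ht2
  · linarith
end
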